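/- arXiv:2406.06026 — 8 statements merged into one kernel-verified Lean document; each statement's English description precedes it below -/
import Mathlib

section
/- The function f(x) = x·(ln x)²/(x−1)² is strictly decreasing on the interval (1, ∞). -/
/-!
Substituting `x = exp (2 * u)` turns the function into `(u / sinh u) ^ 2`. On `u > 0`,
`sinh u / u` is the slope of the chord from `0` of the strictly convex function `sinh`, hence
strictly increasing, so `u / sinh u` is strictly decreasing.
-/

open Real Set

theorem strictConvexOn_sinh : StrictConvexOn ℝ (Ici 0) sinh :=
  strictConvexOn_of_deriv2_pos (convex_Ici 0) continuous_sinh.continuousOn fun x hx => by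
    rw [interior_Ici] at hx
    simpa [Real.deriv_sinh, Real.deriv_cosh] using sinh_pos_iff.2 hx

theorem strictMonoOn_sinh_div_self : StrictMonoOn (fun t => sinh t / t) (Ioi 0) :=
  fun x hx y hy hxy => by
    simpa using strictConvexOn_sinh.secant_strict_mono self_mem_Ici (Ioi_subset_Ici_self hx)
      (Ioi_subset_Ici_self hy) hx.ne' hy.ne' hxy

theorem strictAntiOn_self_div_sinh : StrictAntiOn (fun t => t / sinh t) (Ioi 0) :=
  fun x hx y hy hxy => by
    simp only [← one_div_div (sinh _)]
    exact one_div_lt_one_div_of_lt (div_pos (sinh_pos_iff.2 hx) hx)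
      (strictMonoOn_sinh_div_self hx hy hxy)

theorem exp_two_mul_mul_sq_div_sub_one_sq (u : ℝ) :
    exp (2 * u) * (2 * u) ^ 2 / (exp (2 * u) - 1) ^ 2 = (u / sinh u) ^ 2 := by
  rw [sinh_eq, exp_neg, two_mul, exp_add]
  field_simp
  ring

theorem mul_log_sq_div_sub_one_sq {x : ℝ} (hx : 0 < x) :
    x * log x ^ 2 / (x - 1) ^ 2 = (log x / 2 / sinh (log x / 2)) ^ 2 := by
  obtain ⟨u, rfl⟩ : ∃ u, x = exp (2 * u) :=
    ⟨log x / 2, by rw [mul_div_cancel₀ _ two_ne_zero, exp_log hx]⟩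
  rw [log_exp, mul_div_cancel_left₀ _ two_ne_zero, exp_two_mul_mul_sq_div_sub_one_sq]

theorem stmt_0 :
    StrictAntiOn (fun x : ℝ => x * (Real.log x) ^ 2 / (x - 1) ^ 2) (Set.Ioi 1) := by
  intro a ha b hb hab
  have half_log_pos {x : ℝ} (hx : x ∈ Ioi 1) : log x / 2 ∈ Ioi 0 := half_pos (log_pos hx)
  have hlog : log a / 2 < log b / 2 := by gcongr; exact zero_lt_one.trans ha
  simp only [mul_log_sq_div_sub_one_sq (zero_lt_one.trans ha),
    mul_log_sq_div_sub_one_sq (zero_lt_one.trans hb)]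
  exact pow_lt_pow_left₀ (strictAntiOn_self_div_sinh (half_log_pos ha) (half_log_pos hb) hlog)
    (div_pos (half_log_pos hb) (sinh_pos_iff.2 (half_log_pos hb))).le two_ne_zero
end

section
/- For k > 0 and ω > 1, setting A = exp(ω/k) and B = exp((ω−1)/k), the quantity CS(k) = (1−μ*)/(B−1) − 1/(A−1) is strictly increasing in k, for any fixed μ* satisfying (A−B)/(B(A−1)) < μ* ≤ 1/ω (a condition that must hold for all k under consideration). Equivalently, the derivative (1−μ*)(ω−1)B/(k²(B−1)²) − ωA/(k²(A−1)²) is positive whenever 1−μ* ≥ 1 − 1/ω = ln B/ln A. -/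
/-!
Since `sinh` is strictly convex on `[0, ∞)` and vanishes at `0`, its secant slope `sinh x / x`
is strictly increasing on `(0, ∞)`. As `(eˣ - 1)² / (x² eˣ) = (sinh (x/2) / (x/2))²`, comparing
`x = (ω - 1)/k` with `x = ω/k` gives `ω² A (B - 1)² < (ω - 1)² B (A - 1)²`; the bound
`1 - μ* ≥ (ω - 1)/ω` then turns this into positivity of the derivative.
-/

open Real Set

theorem sinh_div_self_strictMonoOn : StrictMonoOn (fun x => sinh x / x) (Ioi 0) := by
  intro x hx y hy hxy
  simpa using strictConvexOn_sinh.secant_strict_mono self_mem_Ici (mem_Ici.2 (le_of_lt hx))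
    (mem_Ici.2 (le_of_lt hy)) (ne_of_gt hx) (ne_of_gt hy) hxy

theorem exp_sub_one_sq_div_eq (x : ℝ) :
    (exp x - 1) ^ 2 / (x ^ 2 * exp x) = (sinh (x / 2) / (x / 2)) ^ 2 := by
  have h : exp x = exp (x / 2) ^ 2 := by rw [← exp_nat_mul]; ring_nf
  rw [sinh_eq, exp_neg, h]
  have := exp_pos (x / 2)
  field_simp

theorem exp_sub_one_sq_div_strictMonoOn :
    StrictMonoOn (fun x => (exp x - 1) ^ 2 / (x ^ 2 * exp x)) (Ioi 0) := by
  intro x hx y hy hxy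
  have hx2 : 0 < x / 2 := half_pos hx
  have hpos : 0 < sinh (x / 2) / (x / 2) := div_pos (sinh_pos_iff.2 hx2) hx2
  simp only [exp_sub_one_sq_div_eq]
  exact pow_lt_pow_left₀ (sinh_div_self_strictMonoOn hx2 (half_pos (mem_Ioi.1 hy)) (by linarith))
    hpos.le two_ne_zero

theorem sq_mul_exp_mul_exp_sub_one_sq_lt {a b : ℝ} (hb : 0 < b) (hab : b < a) :
    a ^ 2 * exp a * (exp b - 1) ^ 2 < b ^ 2 * exp b * (exp a - 1) ^ 2 := by
  have h := exp_sub_one_sq_div_strictMonoOn (mem_Ioi.2 hb) (mem_Ioi.2 (hb.trans hab)) hab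
  have ha : 0 < a := hb.trans hab
  rw [div_lt_div_iff₀ (by positivity) (by positivity)] at h
  linarith

theorem stmt_2_general (ω k μs : ℝ) (hω : 1 < ω) (hk : 0 < k)
    (A B : ℝ) (hA : A = Real.exp (ω / k)) (hB : B = Real.exp ((ω - 1) / k))
    (hhigh : μs ≤ 1 / ω) :
    0 < (1 - μs) * (ω - 1) * B / (k ^ 2 * (B - 1) ^ 2)
        - ω * A / (k ^ 2 * (A - 1) ^ 2) := by
  have hω0 : 0 < ω := by linarith
  have hab : (ω - 1) / k < ω / k := by gcongr; linarith
  have hA1 : 0 < A - 1 := sub_pos.2 (hA ▸ one_lt_exp_iff.2 (by positivity))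
  have hB1 : 0 < B - 1 := sub_pos.2 (hB ▸ one_lt_exp_iff.2 (by positivity))
  have hkey : ω ^ 2 * A * (B - 1) ^ 2 < (ω - 1) ^ 2 * B * (A - 1) ^ 2 := by
    have h := sq_mul_exp_mul_exp_sub_one_sq_lt (div_pos (by linarith) hk) hab
    rw [← hA, ← hB, div_pow, div_pow] at h
    field_simp at h
    linarith
  have hμ : ω - 1 ≤ (1 - μs) * ω := by
    have := (le_div_iff₀ hω0).1 hhigh
    linarith
  have hmain : ω * A * (B - 1) ^ 2 < (1 - μs) * (ω - 1) * B * (A - 1) ^ 2 := by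
    refine lt_of_mul_lt_mul_left ?_ hω0.le
    calc ω * (ω * A * (B - 1) ^ 2) < (ω - 1) * ((ω - 1) * B * (A - 1) ^ 2) := by linarith
      _ ≤ (1 - μs) * ω * ((ω - 1) * B * (A - 1) ^ 2) := by
        gcongr
        exact mul_nonneg (mul_nonneg (by linarith) (hB ▸ exp_nonneg _)) (sq_nonneg _)
      _ = ω * ((1 - μs) * (ω - 1) * B * (A - 1) ^ 2) := by ring
  rw [sub_pos, div_lt_div_iff₀ (by positivity) (by positivity)]
  calc ω * A * (k ^ 2 * (B - 1) ^ 2) = k ^ 2 * (ω * A * (B - 1) ^ 2) := by ring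
    _ < k ^ 2 * ((1 - μs) * (ω - 1) * B * (A - 1) ^ 2) := by gcongr
    _ = (1 - μs) * (ω - 1) * B * (k ^ 2 * (A - 1) ^ 2) := by ring

theorem stmt_2 (ω k μs : ℝ) (hω : 1 < ω) (hk : 0 < k)
    (A B : ℝ) (hA : A = Real.exp (ω / k)) (hB : B = Real.exp ((ω - 1) / k))
    (hlow : (A - B) / (B * (A - 1)) < μs) (hhigh : μs ≤ 1 / ω) :
    0 < (1 - μs) * (ω - 1) * B / (k ^ 2 * (B - 1) ^ 2)
        - ω * A / (k ^ 2 * (A - 1) ^ 2) :=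
  stmt_2_general ω k μs hω hk A B hA hB hhigh
end

section
/- For k > 0 and ω > 1, with A = exp(ω/k) and B = exp((ω−1)/k), if 1 − μ* ≥ ln(B)/ln(A), then (1−μ*)·ln(B)·B/(B−1)² > ln(A)·A/(A−1)². -/
/-!
Writing `a = log A`, `b = log B`, the hypothesis gives `1 - μ* ≥ b / a`, so it suffices that
`b² e^b / (e^b - 1)² > a² e^a / (e^a - 1)²` for `0 < b < a`. Since `e^x - 1 = 2 e^{x/2} sinh (x/2)`,
this function equals `((x/2) / sinh (x/2))²`, and `sinh t / t` is strictly increasing on `t > 0`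
because it is the slope of a secant of the strictly convex function `sinh` through the origin.
-/

open Real Set

namespace Real

lemma strictConvexOn_sinh : StrictConvexOn ℝ (Ici 0) sinh :=
  StrictMonoOn.strictConvexOn_of_deriv (convex_Ici 0) continuous_sinh.continuousOn <| by
    simpa only [deriv_sinh, interior_Ici] using cosh_strictMonoOn.mono Ioi_subset_Ici_self

lemma sinh_div_self_strictMonoOn : StrictMonoOn (fun x => sinh x / x) (Ioi 0) := by
  intro x (hx : 0 < x) y (hy : 0 < y) hxy
  simpa only [sinh_zero, sub_zero] using
    strictConvexOn_sinh.secant_strict_mono self_mem_Ici (mem_Ici.2 hx.le) (mem_Ici.2 hy.le)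
      hx.ne' hy.ne' hxy

lemma exp_sub_one_eq_two_mul_exp_half_mul_sinh_half (x : ℝ) :
    exp x - 1 = 2 * exp (x / 2) * sinh (x / 2) := by
  rw [sinh_eq]
  field_simp
  rw [mul_sub, ← exp_add, ← exp_add]
  norm_num

lemma sq_mul_exp_div_exp_sub_one_sq (x : ℝ) :
    x ^ 2 * exp x / (exp x - 1) ^ 2 = (x / 2 / sinh (x / 2)) ^ 2 := by
  rw [exp_sub_one_eq_two_mul_exp_half_mul_sinh_half, mul_pow, mul_pow, ← exp_nat_mul]
  field_simp
  ring_nf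

lemma strictAntiOn_sq_mul_exp_div_exp_sub_one_sq :
    StrictAntiOn (fun x => x ^ 2 * exp x / (exp x - 1) ^ 2) (Ioi 0) := by
  intro x (hx : 0 < x) y (hy : 0 < y) hxy
  have hx2 : 0 < x / 2 := half_pos hx
  have hp : 0 < sinh (x / 2) / (x / 2) := div_pos (sinh_pos_iff.2 hx2) hx2
  have hpq : sinh (x / 2) / (x / 2) < sinh (y / 2) / (y / 2) :=
    sinh_div_self_strictMonoOn hx2 (mem_Ioi.2 (half_pos hy)) (by linarith)
  have hq : 0 < (sinh (y / 2) / (y / 2))⁻¹ := inv_pos.2 (hp.trans hpq)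
  simp only [sq_mul_exp_div_exp_sub_one_sq]
  rw [← inv_div (sinh (y / 2)), ← inv_div (sinh (x / 2))]
  gcongr

lemma mul_exp_div_exp_sub_one_sq_lt {a b c : ℝ} (hb : 0 < b) (hba : b < a) (hc : b / a ≤ c) :
    a * exp a / (exp a - 1) ^ 2 < c * b * exp b / (exp b - 1) ^ 2 := by
  have ha : 0 < a := hb.trans hba
  calc a * exp a / (exp a - 1) ^ 2 = a ^ 2 * exp a / (exp a - 1) ^ 2 / a := by
        field_simp
    _ < b ^ 2 * exp b / (exp b - 1) ^ 2 / a :=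
        div_lt_div_of_pos_right (strictAntiOn_sq_mul_exp_div_exp_sub_one_sq hb ha hba) ha
    _ = b / a * (b * exp b / (exp b - 1) ^ 2) := by ring
    _ ≤ c * (b * exp b / (exp b - 1) ^ 2) := by gcongr
    _ = c * b * exp b / (exp b - 1) ^ 2 := by ring

end Real

theorem stmt_3_general (ω k μs : ℝ) (hω : 1 < ω) (hk : 0 < k)
    (A B : ℝ) (hA : A = Real.exp (ω / k)) (hB : B = Real.exp ((ω - 1) / k))
    (h : 1 - μs ≥ Real.log B / Real.log A) :
    (1 - μs) * Real.log B * B / (B - 1) ^ 2 > Real.log A * A / (A - 1) ^ 2 := by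
  subst hA hB
  rw [Real.log_exp, Real.log_exp] at h ⊢
  exact Real.mul_exp_div_exp_sub_one_sq_lt (div_pos (by linarith) hk)
    (div_lt_div_of_pos_right (by linarith) hk) h

theorem stmt_3 (ω k μs : ℝ) (hω : 1 < ω) (hk : 0 < k) (hμ : μs ∈ Set.Ioo (0:ℝ) 1)
    (A B : ℝ) (hA : A = Real.exp (ω / k)) (hB : B = Real.exp ((ω - 1) / k))
    (h : 1 - μs ≥ Real.log B / Real.log A) :
    (1 - μs) * Real.log B * B / (B - 1) ^ 2 > Real.log A * A / (A - 1) ^ 2 :=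
  stmt_3_general ω k μs hω hk A B hA hB h
end

section
/- In the binary case with valuations ω_1 = 1 and ω_2 = ω > 1 and cost parameter k > 0, the unique pair of interior segments satisfying the invariant likelihood ratio conditions has high-type fractions μ¹_2 = (e^{1/k} − 1)/(e^{ω/k} − 1) in the low-price segment and μ²_2 = (e^{ω/k} − e^{(ω−1)/k})/(e^{ω/k} − 1) in the high-price segment; these are the unique values in (0,1) satisfying μ¹_2 / e^{1/k} = μ²_2 / e^{ω/k} and (1−μ¹_2)/e^{1/k} = 1 − μ²_2. -/
theorem stmt_7 (ω k : ℝ) (hω : 1 < ω) (hk : 0 < k)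
    (x y : ℝ) (hx : x ∈ Set.Ioo (0:ℝ) 1) (hy : y ∈ Set.Ioo (0:ℝ) 1) :
    (x / Real.exp (1 / k) = y / Real.exp (ω / k) ∧
        (1 - x) / Real.exp (1 / k) = 1 - y) ↔
      (x = (Real.exp (1 / k) - 1) / (Real.exp (ω / k) - 1) ∧
        y = (Real.exp (ω / k) - Real.exp ((ω - 1) / k)) / (Real.exp (ω / k) - 1)) := by
  set a := Real.exp (1 / k) with hadef
  set b := Real.exp (ω / k) with hbdef
  have ha : 1 < a := by
    rw [hadef, Real.one_lt_exp_iff]; positivity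
  have hab : a < b := by
    rw [hadef, hbdef]
    exact Real.exp_lt_exp.mpr ((div_lt_div_iff_of_pos_right hk).mpr hω)
  have hc : Real.exp ((ω - 1) / k) = b / a := by
    rw [hadef, hbdef, ← Real.exp_sub, sub_div]
  have ha0 : a ≠ 0 := by linarith
  have hb1 : (1:ℝ) < b := lt_trans ha hab
  have hb0 : b ≠ 0 := by linarith
  have hb1' : b - 1 ≠ 0 := by linarith
  constructor
  · rintro ⟨h1, h2⟩
    have hx' : x = (a - 1) / (b - 1) := by
      field_simp at h1 h2 ⊢
      nlinarith [h1, h2]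
    refine ⟨hx', ?_⟩
    rw [hc]
    field_simp at h2 ⊢
    rw [hx'] at h2
    field_simp at h2
    nlinarith [h2]
  · rintro ⟨hx', hy'⟩
    rw [hx', hy', hc]
    constructor <;> field_simp <;> ring
end

section
/- For ω > 1 and k > 0, the candidate segments satisfy μ¹_2 < 1/ω < μ²_2, i.e., (e^{1/k}−1)/(e^{ω/k}−1) < 1/ω and (e^{ω/k}−e^{(ω−1)/k})/(e^{ω/k}−1) > 1/ω. -/
/-! Both inequalities say that the chord of the strictly convex function `exp` over `[0, a]`
lies strictly above its graph at an interior point `t`: `a * exp t < (a - t) + t * exp a`.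
Taking `a = ω / k` and `t = 1 / k`, resp. `t = (ω - 1) / k`, and dividing by `a * (exp a - 1)`
gives the two bounds, since `(1 / k) / (ω / k) = 1 / ω`. -/

open Real Set

lemma exp_chord_lt {t a : ℝ} (ht : 0 < t) (hta : t < a) :
    a * exp t < (a - t) + t * exp a := by
  simpa using strictConvexOn_exp.secant_strict_mono_aux1 (mem_univ 0) (mem_univ a) ht hta

lemma exp_sub_one_div_exp_sub_one_lt {s a : ℝ} (hs : 0 < s) (hsa : s < a) :
    (exp s - 1) / (exp a - 1) < s / a := by
  have ha : 0 < a := hs.trans hsa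
  rw [div_lt_div_iff₀ (sub_pos.2 (one_lt_exp_iff.2 ha)) ha]
  linarith [exp_chord_lt hs hsa]

lemma div_lt_exp_sub_exp_sub_div_exp_sub_one {s a : ℝ} (hs : 0 < s) (hsa : s < a) :
    s / a < (exp a - exp (a - s)) / (exp a - 1) := by
  have ha : 0 < a := hs.trans hsa
  rw [div_lt_div_iff₀ ha (sub_pos.2 (one_lt_exp_iff.2 ha))]
  linarith [exp_chord_lt (sub_pos.2 hsa) (sub_lt_self a hs)]

theorem stmt_14 (ω k : ℝ) (hω : 1 < ω) (hk : 0 < k) :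
    (Real.exp (1 / k) - 1) / (Real.exp (ω / k) - 1) < 1 / ω ∧
    (Real.exp (ω / k) - Real.exp ((ω - 1) / k)) / (Real.exp (ω / k) - 1) > 1 / ω := by
  have hs : 0 < 1 / k := by positivity
  have hsa : 1 / k < ω / k := div_lt_div_of_pos_right hω hk
  have hratio : (1 / k) / (ω / k) = 1 / ω := by field_simp
  have hshift : (ω - 1) / k = ω / k - 1 / k := by ring
  refine ⟨?_, ?_⟩
  · rw [← hratio]
    exact exp_sub_one_div_exp_sub_one_lt hs hsa
  · rw [gt_iff_lt, ← hratio, hshift]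
    exact div_lt_exp_sub_exp_sub_div_exp_sub_one hs hsa
end

section
/- The high-type fraction of the low-price optimal segment, μ¹_2(k) = (e^{1/k}−1)/(e^{ω/k}−1), is strictly increasing in k on (0,∞) for fixed ω > 1. -/
/-! Substituting `x = exp (1 / k)` turns the fraction into `(x - 1) / (x ^ ω - 1)`, the
reciprocal of the slope of the secant of the strictly convex function `x ↦ x ^ ω` between `1`
and `x`. That slope strictly increases with `x`, and `x` strictly decreases with `k`. -/

open Real Set

theorem strictMonoOn_rpow_secant_one {ω : ℝ} (hω : 1 < ω) :
    StrictMonoOn (fun x : ℝ => (x ^ ω - 1) / (x - 1)) (Ioi 1) := fun x hx y hy hxy => by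
  simpa using (strictConvexOn_rpow hω).secant_strict_mono (a := 1) (by simp)
    (mem_Ici.mpr (zero_le_one.trans hx.le)) (mem_Ici.mpr (zero_le_one.trans hy.le))
    hx.ne' hy.ne' hxy

theorem strictAntiOn_div_rpow_sub_one {ω : ℝ} (hω : 1 < ω) :
    StrictAntiOn (fun x : ℝ => (x - 1) / (x ^ ω - 1)) (Ioi 1) := by
  have hslope_pos : MapsTo (fun x : ℝ => (x ^ ω - 1) / (x - 1)) (Ioi 1) {r | 0 < r} :=
    fun x (hx : 1 < x) =>
      div_pos (sub_pos.mpr (one_lt_rpow hx (zero_lt_one.trans hω))) (sub_pos.mpr hx)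
  simpa only [Function.comp_def, inv_div] using
    strictAntiOn_inv_pos.comp_strictMonoOn (strictMonoOn_rpow_secant_one hω) hslope_pos

theorem strictAntiOn_exp_one_div : StrictAntiOn (fun k : ℝ => exp (1 / k)) (Ioi 0) :=
  fun _ ha _ _ hab => exp_lt_exp.mpr (one_div_lt_one_div_of_lt ha hab)

theorem mapsTo_exp_one_div : MapsTo (fun k : ℝ => exp (1 / k)) (Ioi 0) (Ioi 1) :=
  fun k (hk : 0 < k) => one_lt_exp_iff.mpr (one_div_pos.mpr hk)

theorem stmt_15 (ω : ℝ) (hω : 1 < ω) :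
    StrictMonoOn (fun k : ℝ => (Real.exp (1 / k) - 1) / (Real.exp (ω / k) - 1))
      (Set.Ioi (0:ℝ)) := by
  have h := (strictAntiOn_div_rpow_sub_one hω).comp strictAntiOn_exp_one_div mapsTo_exp_one_div
  have hsubst : ∀ k : ℝ, exp (1 / k) ^ ω = exp (ω / k) := fun k => by
    rw [← exp_mul, one_div_mul_eq_div]
  simpa only [Function.comp_def, hsubst] using h
end

section
/- In the binary rationalization setup, given target segments 0 ≤ μ¹ < μ* < μ² ≤ 1 with μ¹ in the low-price region and μ² in the high-price region, and valuations ω_1 < ω_2 with ω_1 − ω_2μ² < 0, there exists a strictly convex differentiable function c : [0,1] → ℝ such that c(μ¹) = c(μ²), c'(μ¹) = (ω_1 − ω_2μ²)/(μ² − μ¹), and c'(μ²) = ω_2. -/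
/-!
With `Δ = μ² - μ¹`, `s = (x - μ¹) / Δ`, `d₁ = c'(μ¹) < 0 < d₂ = c'(μ²)`, take
`c x = d₁ Δ (s - |s| ^ p)` with `p = 1 - d₂ / d₁ > 1`. On `[0, 1]` the function `|s| ^ p` has
slope `0` at `0`, slope `p` at `1` and chord slope `1`, so `c` has equal values at the two points,
derivative `d₁` at `μ¹` and `d₁ (1 - p) = d₂` at `μ²`; it is strictly convex because the
derivative `p |s| ^ (p - 2) s` of `|s| ^ p` is strictly increasing.
-/

open Set

theorem strictMono_deriv_abs_rpow {p : ℝ} (hp : 1 < p) :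
    StrictMono fun x : ℝ => p * |x| ^ (p - 2) * x := by
  refine strictMono_of_odd_strictMonoOn_nonneg (fun x => by rw [abs_neg]; ring) ?_
  have hpow : EqOn (fun x : ℝ => p * x ^ (p - 1)) (fun x => p * |x| ^ (p - 2) * x) (Ici 0) := by
    intro x (hx : 0 ≤ x)
    rcases hx.eq_or_lt with rfl | hx
    · simp [Real.zero_rpow (by linarith : p - 1 ≠ 0)]
    · show p * x ^ (p - 1) = p * |x| ^ (p - 2) * x
      rw [abs_of_pos hx, mul_assoc, ← Real.rpow_add_one hx.ne']
      ring_nf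
  refine StrictMonoOn.congr (fun x hx y hy hxy => ?_) hpow
  exact mul_lt_mul_of_pos_left (Real.strictMonoOn_rpow_Ici_of_exponent_pos (by linarith) hx hy hxy)
    (by linarith)

theorem exists_strictConvexOn_eq_deriv_eq {a b d₁ d₂ : ℝ} (hab : a < b) (hd₁ : d₁ < 0)
    (hd₂ : 0 < d₂) :
    ∃ c : ℝ → ℝ, StrictConvexOn ℝ univ c ∧ Differentiable ℝ c ∧
      c a = c b ∧ deriv c a = d₁ ∧ deriv c b = d₂ := by
  set p := 1 - d₂ / d₁
  have hp : 1 < p := by linarith [div_neg_of_pos_of_neg hd₂ hd₁]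
  have hΔ : b - a ≠ 0 := sub_ne_zero.mpr hab.ne'
  set s : ℝ → ℝ := fun x => (x - a) / (b - a)
  set g : ℝ → ℝ := fun x => p * |x| ^ (p - 2) * x
  set c : ℝ → ℝ := fun x => d₁ * (b - a) * (s x - |s x| ^ p)
  have hs : ∀ x, HasDerivAt s (1 / (b - a)) x := fun x =>
    ((hasDerivAt_id x).sub_const a).div_const (b - a)
  have hc : ∀ x, HasDerivAt c (d₁ * (1 - g (s x))) x := by
    intro x
    refine (((hs x).sub ((hasDerivAt_abs_rpow (s x) hp).comp x (hs x))).const_mul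
      (d₁ * (b - a))).congr_deriv ?_
    simp only [g]
    field_simp
  have hderiv : deriv c = fun x => d₁ * (1 - g (s x)) := funext fun x => (hc x).deriv
  have hsa : s a = 0 := by simp [s]
  have hsb : s b = 1 := div_self hΔ
  refine ⟨c, ?_, fun x => (hc x).differentiableAt, ?_, ?_, ?_⟩
  · refine StrictMono.strictConvexOn_univ_of_deriv
      (continuous_iff_continuousAt.mpr fun x => (hc x).continuousAt) fun x y hxy => ?_
    have hs_lt : s x < s y := div_lt_div_of_pos_right (by linarith) (sub_pos.mpr hab)
    rw [hderiv]
    exact mul_lt_mul_of_neg_left (by linarith [strictMono_deriv_abs_rpow hp hs_lt]) hd₁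
  · simp [c, hsa, hsb, Real.zero_rpow (by linarith : p ≠ 0)]
  · simp [hderiv, hsa, g]
  · simp only [hderiv, hsb, g, abs_one, Real.one_rpow, p]
    field_simp [hd₁.ne]
    ring

theorem stmt_17_general (ω1 ω2 μ1 μstar μ2 : ℝ)
    (h1 : μ1 < μstar) (h2 : μstar < μ2)
    (hω1 : 0 < ω1) (hω12 : ω1 < ω2) (hhigh : ω1 - ω2 * μ2 < 0) :
    ∃ c : ℝ → ℝ, StrictConvexOn ℝ (Set.Icc (0:ℝ) 1) c ∧ Differentiable ℝ c ∧
      c μ1 = c μ2 ∧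
      deriv c μ1 = (ω1 - ω2 * μ2) / (μ2 - μ1) ∧
      deriv c μ2 = ω2 := by
  have hμ : μ1 < μ2 := h1.trans h2
  obtain ⟨c, hconv, hdiff, hval, hd₁, hd₂⟩ := exists_strictConvexOn_eq_deriv_eq hμ
    (div_neg_of_neg_of_pos hhigh (sub_pos.mpr hμ)) (hω1.trans hω12)
  exact ⟨c, hconv.subset (subset_univ _) (convex_Icc 0 1), hdiff, hval, hd₁, hd₂⟩

theorem stmt_17 (ω1 ω2 μ1 μstar μ2 : ℝ)
    (h0 : 0 ≤ μ1) (h1 : μ1 < μstar) (h2 : μstar < μ2) (h3 : μ2 ≤ 1)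
    (hω1 : 0 < ω1) (hω12 : ω1 < ω2) (hhigh : ω1 - ω2 * μ2 < 0) :
    ∃ c : ℝ → ℝ, StrictConvexOn ℝ (Set.Icc (0:ℝ) 1) c ∧ Differentiable ℝ c ∧
      c μ1 = c μ2 ∧
      deriv c μ1 = (ω1 - ω2 * μ2) / (μ2 - μ1) ∧
      deriv c μ2 = ω2 :=
  stmt_17_general ω1 ω2 μ1 μstar μ2 h1 h2 hω1 hω12 hhigh
end

section
/- Continuity of binary consumer surplus in the cost parameter, with vanishing endpoints: the function CS(k) = τ(k)·μ¹_2(k)·(ω−1), where μ¹_2(k) = (e^{1/k}−1)/(e^{ω/k}−1), μ²_2(k) = (e^{ω/k}−e^{(ω−1)/k})/(e^{ω/k}−1), and τ(k) = (μ²_2(k) − μ*)/(μ²_2(k) − μ¹_2(k)) truncated to [0,1], is continuous on (0,∞), tends to 0 as k → 0⁺, and, if μ* > 1/ω, tends to 0 as k → ∞ (since eventually μ²_2(k) < μ* forces τ = 0, i.e., no segmentation); hence if CS(k₀) > 0 for some k₀, CS is non-monotone on (0,∞). -/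
open Filter Topology

noncomputable def seg1 (ω k : ℝ) : ℝ :=
  (Real.exp (1 / k) - 1) / (Real.exp (ω / k) - 1)

noncomputable def seg2 (ω k : ℝ) : ℝ :=
  (Real.exp (ω / k) - Real.exp ((ω - 1) / k)) / (Real.exp (ω / k) - 1)

/-- Weight on the low-price segment, truncated to `[0,1]`. -/
noncomputable def segWeight (ω μstar k : ℝ) : ℝ :=
  max 0 (min 1 ((seg2 ω k - μstar) / (seg2 ω k - seg1 ω k)))

/-- Consumer surplus as a function of the cost parameter `k`. -/
noncomputable def CS (ω μstar k : ℝ) : ℝ :=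
  segWeight ω μstar k * seg1 ω k * (ω - 1)

/-!
With `t = 1/k`, `seg1 = (eᵗ - 1)/(e^{ωt} - 1)` and `seg2 = e^{(ω-1)t} · seg1`. Hence
`0 ≤ seg1 ≤ e^{-(ω-1)t}`, which forces `CS → 0` as `k → 0⁺`. As `k → ∞`, the slopes of
`exp` at `0` give `seg1 → 1/ω` and so `seg2 → 1/ω < μ*`: eventually the truncated weight is
`0` and `CS` vanishes. A function with equal limits at both ends of `(0, ∞)` that exceeds them
somewhere is neither monotone nor antitone.
-/

open Real

theorem not_monotoneOn_and_not_antitoneOn_of_tendsto {β : Type*} [Preorder β]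
    [TopologicalSpace β] [OrderClosedTopology β] {f : ℝ → β} {a : ℝ} {c : β}
    (h_left : Tendsto f (𝓝[>] a) (𝓝 c)) (h_top : Tendsto f atTop (𝓝 c))
    {x₀ : ℝ} (hx₀ : a < x₀) (hc : c < f x₀) :
    ¬ MonotoneOn f (Set.Ioi a) ∧ ¬ AntitoneOn f (Set.Ioi a) := by
  constructor
  · intro hmono
    have : f x₀ ≤ c := ge_of_tendsto h_top <| by
      filter_upwards [eventually_ge_atTop x₀] with y hy
      exact hmono hx₀ (hx₀.trans_le hy) hy
    exact (hc.trans_le this).false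
  · intro hanti
    have : f x₀ ≤ c := ge_of_tendsto h_left <| by
      filter_upwards [Ioo_mem_nhdsGT hx₀] with y hy
      exact hanti hy.1 hx₀ hy.2.le
    exact (hc.trans_le this).false

theorem tendsto_exp_mul_sub_one_div (a : ℝ) :
    Tendsto (fun t => (exp (a * t) - 1) / t) (𝓝[≠] 0) (𝓝 a) := by
  have hderiv : HasDerivAt (fun t => exp (a * t)) a 0 := by
    simpa using ((hasDerivAt_id (0 : ℝ)).const_mul a).exp
  simpa [div_eq_inv_mul] using hderiv.tendsto_slope_zero

theorem tendsto_exp_mul_sub_one_div_exp_mul_sub_one (a : ℝ) {b : ℝ} (hb : b ≠ 0) :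
    Tendsto (fun t => (exp (a * t) - 1) / (exp (b * t) - 1)) (𝓝[≠] 0) (𝓝 (a / b)) := by
  refine ((tendsto_exp_mul_sub_one_div a).div (tendsto_exp_mul_sub_one_div b) hb).congr' ?_
  filter_upwards [self_mem_nhdsWithin] with t ht
  exact div_div_div_cancel_right₀ ht _ _

section
variable {ω k : ℝ}

theorem seg2_eq_exp_mul_seg1 : seg2 ω k = exp ((ω - 1) / k) * seg1 ω k := by
  have hsplit : ω / k = (ω - 1) / k + 1 / k := by ring
  rw [seg2, seg1, mul_div_assoc', hsplit, exp_add]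
  ring_nf

theorem exp_div_sub_one_pos {c : ℝ} (hc : 0 < c) (hk : 0 < k) : 0 < exp (c / k) - 1 :=
  sub_pos.2 (one_lt_exp_iff.2 (div_pos hc hk))

theorem seg1_pos (hω : 0 < ω) (hk : 0 < k) : 0 < seg1 ω k :=
  div_pos (exp_div_sub_one_pos one_pos hk) (exp_div_sub_one_pos hω hk)

theorem seg2_le_one (hω : 1 ≤ ω) (hk : 0 < k) : seg2 ω k ≤ 1 := by
  rw [seg2, div_le_one (exp_div_sub_one_pos (by linarith) hk)]
  have : 1 ≤ exp ((ω - 1) / k) := one_le_exp (div_nonneg (by linarith) hk.le)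
  linarith

theorem seg1_le_exp_neg (hω : 1 ≤ ω) (hk : 0 < k) : seg1 ω k ≤ exp (-((ω - 1) / k)) :=
  calc seg1 ω k = exp (-((ω - 1) / k)) * seg2 ω k := by
        rw [seg2_eq_exp_mul_seg1, ← mul_assoc, ← exp_add, neg_add_cancel, exp_zero, one_mul]
    _ ≤ exp (-((ω - 1) / k)) * 1 := by gcongr; exact seg2_le_one hω hk
    _ = exp (-((ω - 1) / k)) := mul_one _

theorem seg1_lt_seg2 (hω : 1 < ω) (hk : 0 < k) : seg1 ω k < seg2 ω k := by
  rw [seg2_eq_exp_mul_seg1]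
  exact lt_mul_of_one_lt_left (seg1_pos (by linarith) hk)
    (one_lt_exp_iff.2 (div_pos (by linarith) hk))

end

section
variable {ω : ℝ}

theorem tendsto_seg1_nhdsGT_zero (hω : 1 < ω) : Tendsto (seg1 ω) (𝓝[>] 0) (𝓝 0) := by
  have hexp : Tendsto (fun k => exp (-((ω - 1) / k))) (𝓝[>] 0) (𝓝 0) := by
    refine tendsto_exp_neg_atTop_nhds_zero.comp ?_
    exact (tendsto_inv_nhdsGT_zero.const_mul_atTop (sub_pos.2 hω)).congr fun k =>
      (div_eq_mul_inv _ _).symm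
  refine squeeze_zero' ?_ ?_ hexp
  · filter_upwards [self_mem_nhdsWithin] with k hk using (seg1_pos (by linarith) hk).le
  · filter_upwards [self_mem_nhdsWithin] with k hk using seg1_le_exp_neg hω.le hk

theorem tendsto_seg1_atTop (hω : ω ≠ 0) : Tendsto (seg1 ω) atTop (𝓝 (1 / ω)) := by
  have hinv : Tendsto (fun k : ℝ => k⁻¹) atTop (𝓝[≠] 0) :=
    tendsto_inv_atTop_nhdsGT_zero.mono_right (nhdsGT_le_nhdsNE 0)
  have := (tendsto_exp_mul_sub_one_div_exp_mul_sub_one 1 hω).comp hinv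
  exact this.congr fun k => by simp [seg1, div_eq_mul_inv]

theorem tendsto_seg2_atTop (hω : ω ≠ 0) : Tendsto (seg2 ω) atTop (𝓝 (1 / ω)) := by
  have hexp : Tendsto (fun k => exp ((ω - 1) / k)) atTop (𝓝 1) := by
    simpa [Function.comp_def] using
      (continuous_exp.tendsto 0).comp (tendsto_const_nhds.div_atTop tendsto_id)
  have := hexp.mul (tendsto_seg1_atTop hω)
  rw [one_mul] at this
  exact this.congr fun k => seg2_eq_exp_mul_seg1.symm

theorem continuousOn_exp_div (c : ℝ) : ContinuousOn (fun k => exp (c / k)) (Set.Ioi 0) :=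
  continuous_exp.comp_continuousOn (continuousOn_const.div continuousOn_id fun _ hk => hk.ne')

theorem continuousOn_seg1 (hω : 0 < ω) : ContinuousOn (seg1 ω) (Set.Ioi 0) :=
  ((continuousOn_exp_div 1).sub continuousOn_const).div
    ((continuousOn_exp_div ω).sub continuousOn_const) fun _ hk => (exp_div_sub_one_pos hω hk).ne'

theorem continuousOn_seg2 (hω : 0 < ω) : ContinuousOn (seg2 ω) (Set.Ioi 0) :=
  ((continuousOn_exp_div ω).sub (continuousOn_exp_div (ω - 1))).div
    ((continuousOn_exp_div ω).sub continuousOn_const) fun _ hk => (exp_div_sub_one_pos hω hk).ne'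

end

section
variable {ω μstar k : ℝ}

theorem segWeight_nonneg : 0 ≤ segWeight ω μstar k := le_max_left _ _

theorem segWeight_le_one : segWeight ω μstar k ≤ 1 := max_le zero_le_one (min_le_left _ _)

theorem segWeight_eq_zero_of_seg2_le (hgap : seg1 ω k < seg2 ω k) (h : seg2 ω k ≤ μstar) :
    segWeight ω μstar k = 0 :=
  max_eq_left <| (min_le_right _ _).trans <|
    div_nonpos_of_nonpos_of_nonneg (sub_nonpos.2 h) (sub_pos.2 hgap).le

theorem continuousOn_segWeight (hω : 1 < ω) : ContinuousOn (segWeight ω μstar) (Set.Ioi 0) :=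
  continuousOn_const.sup <| continuousOn_const.inf <|
    ((continuousOn_seg2 (by linarith)).sub continuousOn_const).div
      ((continuousOn_seg2 (by linarith)).sub (continuousOn_seg1 (by linarith)))
      fun _ hk => (sub_pos.2 (seg1_lt_seg2 hω hk)).ne'

theorem continuousOn_CS (hω : 1 < ω) : ContinuousOn (CS ω μstar) (Set.Ioi 0) :=
  ((continuousOn_segWeight hω).mul (continuousOn_seg1 (by linarith))).mul continuousOn_const

theorem CS_nonneg (hω : 1 ≤ ω) (hk : 0 < k) : 0 ≤ CS ω μstar k :=
  mul_nonneg (mul_nonneg segWeight_nonneg (seg1_pos (by linarith) hk).le) (by linarith)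

theorem CS_le_seg1_mul (hω : 1 ≤ ω) (hk : 0 < k) : CS ω μstar k ≤ seg1 ω k * (ω - 1) :=
  mul_le_mul_of_nonneg_right
    (mul_le_of_le_one_left (seg1_pos (by linarith) hk).le segWeight_le_one) (by linarith)

theorem tendsto_CS_nhdsGT_zero (hω : 1 < ω) : Tendsto (CS ω μstar) (𝓝[>] 0) (𝓝 0) := by
  refine squeeze_zero' ?_ ?_ (by simpa using (tendsto_seg1_nhdsGT_zero hω).mul_const (ω - 1))
  · filter_upwards [self_mem_nhdsWithin] with k hk using CS_nonneg hω.le hk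
  · filter_upwards [self_mem_nhdsWithin] with k hk using CS_le_seg1_mul hω.le hk

theorem CS_eventuallyEq_zero_atTop (hω : 1 < ω) (hμ : 1 / ω < μstar) :
    CS ω μstar =ᶠ[atTop] 0 := by
  filter_upwards [(tendsto_seg2_atTop (by linarith)).eventually_lt_const hμ,
    eventually_gt_atTop 0] with k hseg2 hk
  rw [Pi.zero_apply, CS, segWeight_eq_zero_of_seg2_le (seg1_lt_seg2 hω hk) hseg2.le, zero_mul,
    zero_mul]

end

theorem stmt_19 (ω μstar : ℝ) (hω : 1 < ω) (hμ : μstar ∈ Set.Ioo (1 / ω) 1) :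
    ContinuousOn (CS ω μstar) (Set.Ioi (0:ℝ)) ∧
    Tendsto (CS ω μstar) (𝓝[>] 0) (𝓝 0) ∧
    Tendsto (CS ω μstar) atTop (𝓝 0) ∧
    (∀ k₀ ∈ Set.Ioi (0:ℝ), 0 < CS ω μstar k₀ →
      ¬ MonotoneOn (CS ω μstar) (Set.Ioi (0:ℝ)) ∧
      ¬ AntitoneOn (CS ω μstar) (Set.Ioi (0:ℝ))) := by
  have h_zero : Tendsto (CS ω μstar) (𝓝[>] 0) (𝓝 0) := tendsto_CS_nhdsGT_zero hω
  have h_top : Tendsto (CS ω μstar) atTop (𝓝 0) :=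
    tendsto_const_nhds.congr' (CS_eventuallyEq_zero_atTop hω hμ.1).symm
  exact ⟨continuousOn_CS hω, h_zero, h_top, fun k₀ hk₀ hpos =>
    not_monotoneOn_and_not_antitoneOn_of_tendsto h_zero h_top hk₀ hpos⟩
end
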